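/- arXiv:1310.3600 — 3 statements merged into one kernel-verified Lean document; each statement's English description precedes it below -/
import Mathlib

section
/- Erdős–Rado canonical theorem: For every n ∈ ω and every function c : [ω]^n → R into an arbitrary set R, there exists an infinite set X ⊆ ω and a set I ⊆ {0,...,n-1} such that for all A, B ∈ [X]^n, c(A) = c(B) if and only if A and B agree on the positions indexed by I (i.e., the i-th elements of the increasing enumerations of A and B coincide for all i ∈ I). -/
/-!
By Ramsey's theorem for `2n`-sets we may pass to an infinite set on which whether two `n`-sets
get the same colour depends only on the order type of the pair. Call a position `i` free if two
sets differing only in their `i`-th element can get the same colour, and let `I` be the set of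
non-free positions. Two sets agreeing on `I` are joined by moves of single free entries.

Conversely, let `c A = c B` with `aᵢ < bᵢ`. Extend `aₚ ↦ bₚ` to an order embedding `σ` of `ℚ`.
Consecutive terms of the orbit `A, σA, σ²A, …` have the order type of `(A, B)`, so they all get
the colour of `A`. The orbit of `aᵢ` increases, so by pigeonhole some `σᴺA` does not contain
`aᵢ`; then nudging `aᵢ` upwards does not change the type of `(A, σᴺA)`, and `i` is free.
-/

open Finset Function

namespace CanonicalRamsey

variable {n : ℕ}

section Ramsey

variable {κ : Type*}

theorem exists_seq_color_insert {k : ℕ}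
    (ih : ∀ (χ : Finset ℕ → κ) (Y : Set ℕ), Y.Infinite →
      ∃ X ⊆ Y, X.Infinite ∧ ∃ p, ∀ s : Finset ℕ, ↑s ⊆ X → #s = k → χ s = p)
    (χ : Finset ℕ → κ) {Y : Set ℕ} (hY : Y.Infinite) :
    ∃ (a : ℕ → ℕ) (p : ℕ → κ), StrictMono a ∧ Set.range a ⊆ Y ∧
      ∀ j (s : Finset ℕ), ↑s ⊆ a '' Set.Ioi j → #s = k → χ (insert (a j) s) = p j := by
  have thin (Z : Set ℕ) (hZ : Z.Infinite) : ∃ W ⊆ Z \ Set.Iic (sInf Z), W.Infinite ∧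
      ∃ p, ∀ s : Finset ℕ, ↑s ⊆ W → #s = k → χ (insert (sInf Z) s) = p :=
    ih _ _ (hZ.sdiff (Set.finite_Iic _))
  choose W hWsub hWinf p hp using thin
  let Z : ℕ → {Z : Set ℕ // Z.Infinite} := fun j =>
    Nat.rec ⟨Y, hY⟩ (fun _ Z => ⟨W Z.1 Z.2, hWinf Z.1 Z.2⟩) j
  have hZsucc (j : ℕ) : (Z (j + 1)).1 ⊆ (Z j).1 \ Set.Iic (sInf (Z j).1) := hWsub _ _
  have hZanti : Antitone fun j => (Z j).1 :=
    antitone_nat_of_succ_le fun j => (hZsucc j).trans Set.sdiff_subset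
  have hmem (j : ℕ) : sInf (Z j).1 ∈ (Z j).1 := Nat.sInf_mem (Z j).2.nonempty
  refine ⟨fun j => sInf (Z j).1, fun j => p _ (Z j).2,
    strictMono_nat_of_lt_succ fun j => not_le.1 (hZsucc j (hmem (j + 1))).2, ?_, ?_⟩
  · rintro _ ⟨j, rfl⟩
    exact hZanti (Nat.zero_le j) (hmem j)
  · rintro j s hs hcard
    refine hp _ _ s (hs.trans ?_) hcard
    rintro _ ⟨j', hj', rfl⟩
    exact hZanti (Nat.succ_le_of_lt hj') (hmem j')

theorem exists_infinite_monochromatic [Finite κ] (k : ℕ) (χ : Finset ℕ → κ) {Y : Set ℕ}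
    (hY : Y.Infinite) :
    ∃ X ⊆ Y, X.Infinite ∧ ∃ p, ∀ s : Finset ℕ, ↑s ⊆ X → #s = k → χ s = p := by
  induction k generalizing χ Y with
  | zero => exact ⟨Y, subset_rfl, hY, χ ∅, fun s _ hs => by rw [card_eq_zero.1 hs]⟩
  | succ k ih =>
    obtain ⟨a, p, ha, haY, hap⟩ := exists_seq_color_insert (fun χ Y hY => ih χ hY) χ hY
    obtain ⟨b, hb⟩ := Finite.exists_infinite_fiber p
    refine ⟨a '' (p ⁻¹' {b}), (Set.image_subset_range _ _).trans haY,
      (Set.infinite_coe_iff.1 hb).image ha.injective.injOn, b, fun s hs hcard => ?_⟩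
    have hne : s.Nonempty := card_pos.1 (by omega)
    obtain ⟨j, hj, hjmin⟩ := hs (s.min'_mem hne)
    have hjs : a j ∈ s := hjmin ▸ s.min'_mem hne
    have hrest : ↑(s.erase (a j)) ⊆ a '' Set.Ioi j := by
      intro x hx
      obtain ⟨hxj, hxs⟩ := mem_erase.1 hx
      obtain ⟨j', -, rfl⟩ := hs hxs
      exact ⟨j', ha.lt_iff_lt.1 ((hjmin ▸ s.min'_le _ hxs).lt_of_ne' hxj), rfl⟩
    rw [← insert_erase hjs, hap j _ hrest (by rw [card_erase_of_mem hjs, hcard]; rfl)]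
    exact hj

theorem exists_strictMono_forall_comp_eq [Finite κ] (k : ℕ) (χ : (Fin k → ℕ) → κ) :
    ∃ e : ℕ → ℕ, StrictMono e ∧ ∃ P, ∀ E : Fin k → ℕ, StrictMono E → χ (e ∘ E) = P := by
  obtain ⟨X, -, hX, P, hP⟩ := exists_infinite_monochromatic k
    (fun s => if h : #s = k then χ (s.orderEmbOfFin h) else χ 0) Set.infinite_univ
  refine ⟨Nat.nth (· ∈ X), Nat.nth_strictMono hX, P, fun E hE => ?_⟩
  have hcomp : StrictMono (Nat.nth (· ∈ X) ∘ E) := (Nat.nth_strictMono hX).comp hE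
  have hcard : #(univ.image (Nat.nth (· ∈ X) ∘ E)) = k := by
    rw [card_image_of_injective _ hcomp.injective, card_fin]
  have hsub : ↑(univ.image (Nat.nth (· ∈ X) ∘ E)) ⊆ X := by
    intro x hx
    obtain ⟨q, -, rfl⟩ := mem_image.1 hx
    exact Nat.nth_mem_of_infinite hX _
  have := hP _ hsub hcard
  rwa [dif_pos hcard, ← orderEmbOfFin_unique hcard (fun q => mem_image_of_mem _ (mem_univ q))
    hcomp] at this

end Ramsey

section OrderType

variable {ι α β γ : Type*} [LinearOrder α] [LinearOrder β] [LinearOrder γ]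

def SameOrderType (h : ι → α) (h' : ι → β) : Prop :=
  ∀ x y, cmp (h x) (h y) = cmp (h' x) (h' y)

theorem SameOrderType.symm {h : ι → α} {h' : ι → β} (H : SameOrderType h h') :
    SameOrderType h' h :=
  fun x y => (H x y).symm

theorem SameOrderType.trans {h : ι → α} {h' : ι → β} {h'' : ι → γ} (H : SameOrderType h h')
    (H' : SameOrderType h' h'') : SameOrderType h h'' :=
  fun x y => (H x y).trans (H' x y)

theorem sameOrderType_comp_of_strictMonoOn {k : α → β} {h : ι → α}
    (hk : StrictMonoOn k (Set.range h)) : SameOrderType (k ∘ h) h :=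
  fun x y => hk.cmp_map_eq ⟨x, rfl⟩ ⟨y, rfl⟩

theorem sameOrderType_comp_of_strictMono {k : α → β} (hk : StrictMono k) (h : ι → α) :
    SameOrderType (k ∘ h) h :=
  fun x y => hk.cmp_map_eq (h x) (h y)

theorem SameOrderType.comp_of_strictMonoOn {h h' : ι → α} (H : SameOrderType h h') {k : α → β}
    {S : Set α} (hk : StrictMonoOn k S) (hh : Set.range h ⊆ S) (hh' : Set.range h' ⊆ S) :
    SameOrderType (k ∘ h) (k ∘ h') :=
  (sameOrderType_comp_of_strictMonoOn (hk.mono hh)).trans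
    (H.trans (sameOrderType_comp_of_strictMonoOn (hk.mono hh')).symm)

theorem card_image_eq_of_eq_iff {α β : Type*} [DecidableEq α] [DecidableEq β] {h : ι → α}
    {h' : ι → β} (H : ∀ x y, h x = h y ↔ h' x = h' y) (s : Finset ι) :
    #(s.image h) = #(s.image h') := by
  classical
  induction s using Finset.induction_on with
  | empty => simp
  | insert x s _ ih =>
    have hmem : h x ∈ s.image h ↔ h' x ∈ s.image h' := by simp only [mem_image, H]
    rw [image_insert, image_insert, card_insert_eq_ite, card_insert_eq_ite, ih]
    simp only [hmem]

theorem SameOrderType.card_filter_lt_eq [Fintype ι] {h : ι → α} {h' : ι → β}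
    (H : SameOrderType h h') (x : ι) :
    #{y ∈ univ.image h | y < h x} = #{y ∈ univ.image h' | y < h' x} := by
  rw [filter_image, filter_image, filter_congr fun y _ => lt_iff_lt_of_cmp_eq_cmp (H y x)]
  exact card_image_eq_of_eq_iff (fun y z => by rw [← cmp_eq_eq_iff, H, cmp_eq_eq_iff]) _

theorem strictMonoOn_card_filter_lt (S : Finset α) :
    StrictMonoOn (fun x => #{y ∈ S | y < x}) S := by
  intro x hx y _ hxy
  refine card_lt_card ((ssubset_iff_of_subset fun z hz => ?_).2 ⟨x, ?_, ?_⟩)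
  · simp only [mem_filter] at hz ⊢
    exact ⟨hz.1, hz.2.trans hxy⟩
  · exact mem_filter.2 ⟨hx, hxy⟩
  · simp

theorem exists_strictMono_comp_rank [Fintype ι] (h : ι → ℕ) :
    ∃ E : Fin (Fintype.card ι) → ℕ, StrictMono E ∧ ∃ s : ι → Fin (Fintype.card ι),
      h = E ∘ s ∧ ∀ x, (s x : ℕ) = #{y ∈ univ.image h | y < h x} := by
  classical
  set U := univ.image h
  -- `W` starts with `U`, so its enumeration lists `U` first
  let W : Set ℕ := {y | y ∈ U ∨ U.sup id < y}
  have hW : W.Infinite := (Set.Ioi_infinite (U.sup id)).mono fun y hy => Or.inr hy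
  have hhU (x : ι) : h x ∈ U := mem_image_of_mem _ (mem_univ x)
  have hcount (x : ι) : Nat.count (· ∈ W) (h x) = #{y ∈ U | y < h x} := by
    rw [Nat.count_eq_card_filter_range]
    congr 1
    ext y
    have : h x ≤ U.sup id := le_sup (f := id) (hhU x)
    simp only [mem_filter, mem_range, W, Set.mem_ofPred_eq]
    constructor
    · rintro ⟨hy, hyU | hy'⟩
      exacts [⟨hyU, hy⟩, absurd (hy.trans_le this) hy'.not_gt]
    · exact fun ⟨hyU, hy⟩ => ⟨hy, Or.inl hyU⟩
  have hlt (x : ι) : #{y ∈ U | y < h x} < Fintype.card ι :=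
    (card_lt_card ((filter_ssubset (p := (· < h x))).2 ⟨h x, hhU x, lt_irrefl _⟩)).trans_le
      (card_image_le.trans_eq card_univ)
  refine ⟨fun k => Nat.nth (· ∈ W) k, (Nat.nth_strictMono hW).comp Fin.val_strictMono,
    fun x => ⟨_, hlt x⟩, funext fun x => ?_, fun x => rfl⟩
  simp only [comp_apply, ← hcount, Nat.nth_count (p := (· ∈ W)) (Or.inl (hhU x))]

end OrderType

section Update

variable {α β : Type*} [LinearOrder α] [LinearOrder β] {f g : Fin n → α}

theorem cmp_eq_of_eq_off (hf : StrictMono f) (hg : StrictMono g) {i : Fin n}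
    (hfg : ∀ p ≠ i, f p = g p) (hi : f i < g i) (p q : Fin n) :
    cmp (f p) (g q) = if p = i ∧ q = i then .lt else cmp p q := by
  split_ifs with h
  · obtain ⟨rfl, rfl⟩ := h
    exact (cmp_eq_lt_iff _ _).2 hi
  by_cases hq : q = i
  · subst hq
    rcases lt_or_gt_of_ne fun hp => h ⟨hp, rfl⟩ with hpq | hpq
    · rw [(cmp_eq_lt_iff _ _).2 ((hf hpq).trans hi), (cmp_eq_lt_iff _ _).2 hpq]
    · rw [hfg p hpq.ne', hg.cmp_map_eq]
  · rw [← hfg q hq, hf.cmp_map_eq]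

theorem sameOrderType_of_eq_off {f' g' : Fin n → β} (hf : StrictMono f) (hg : StrictMono g)
    (hf' : StrictMono f') (hg' : StrictMono g') {i : Fin n} (hfg : ∀ p ≠ i, f p = g p)
    (hi : f i < g i) (hfg' : ∀ p ≠ i, f' p = g' p) (hi' : f' i < g' i) :
    SameOrderType (Sum.elim f g) (Sum.elim f' g') := by
  rintro (p | p) (q | q)
  · simp only [Sum.elim_inl, hf.cmp_map_eq, hf'.cmp_map_eq]
  · simp only [Sum.elim_inl, Sum.elim_inr, cmp_eq_of_eq_off hf hg hfg hi,
      cmp_eq_of_eq_off hf' hg' hfg' hi']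
  · simp only [Sum.elim_inl, Sum.elim_inr]
    rw [← cmp_swap, ← cmp_swap (f' q), cmp_eq_of_eq_off hf hg hfg hi,
      cmp_eq_of_eq_off hf' hg' hfg' hi']
  · simp only [Sum.elim_inr, hg.cmp_map_eq, hg'.cmp_map_eq]

theorem strictMono_update (hf : StrictMono f) {j : Fin n} {y : α} (hlo : ∀ p < j, f p < y)
    (hhi : ∀ p, j < p → y < f p) : StrictMono (update f j y) := by
  intro p q hpq
  simp only [update_apply]
  split_ifs with hp hq hq
  · exact absurd (hp ▸ hq ▸ hpq) (lt_irrefl _)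
  · exact hhi q (hp ▸ hpq)
  · exact hlo p (hq ▸ hpq)
  · exact hf hpq

theorem exists_strictMono_update (hf : StrictMono f) (hg : StrictMono g) (h : ∃ j, f j < g j) :
    ∃ j, f j < g j ∧ StrictMono (update f j (g j)) := by
  obtain ⟨j, hj, hmax⟩ := (univ.filter fun p => f p < g p).exists_max_image id
    (h.imp fun j hj => mem_filter.2 ⟨mem_univ j, hj⟩)
  simp only [mem_filter, mem_univ, true_and, id] at hj hmax
  refine ⟨j, hj, strictMono_update hf (fun p hp => (hf hp).trans hj) fun p hp => ?_⟩
  exact (hg hp).trans_le (not_lt.1 fun hlt => (hmax p hlt).not_gt hp)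

end Update

section Orbits

variable {ι α β : Type*} [LinearOrder α] [LinearOrder β]

theorem SameOrderType.exists_strictMono_comp_eq [Countable α] [DenselyOrdered β] [NoMinOrder β]
    [NoMaxOrder β] [Nonempty β] [Fintype ι] {a : ι → α} {b : ι → β} (hab : SameOrderType a b) :
    ∃ σ : α → β, StrictMono σ ∧ σ ∘ a = b := by
  classical
  cases nonempty_encodable α
  let f₀ : Order.PartialIso α β := ⟨univ.image fun x => (a x, b x), by
    simp only [mem_image, mem_univ, true_and]
    rintro _ ⟨x, rfl⟩ _ ⟨y, rfl⟩
    exact hab x y⟩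
  -- back and forth: an ideal of finite partial isomorphisms containing `f₀`, defined everywhere
  let I := Order.idealOfCofinals f₀ (Order.PartialIso.definedAtLeft β)
  have hI : ∀ g ∈ I, ∀ g' ∈ I, ∀ p ∈ g.val, ∀ q ∈ g'.val, cmp p.1 q.1 = cmp p.2 q.2 := by
    intro g hg g' hg' p hp q hq
    obtain ⟨m, -, hgm, hg'm⟩ := I.directed _ hg _ hg'
    exact m.prop p (hgm hp) q (hg'm hq)
  have hdef (x : α) : ∃ y, ∃ g ∈ I, (x, y) ∈ g.val := by
    obtain ⟨g, ⟨y, hy⟩, hg⟩ :=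
      Order.cofinal_meets_idealOfCofinals f₀ (Order.PartialIso.definedAtLeft β) x
    exact ⟨y, g, hg, hy⟩
  choose σ g hg hσ using hdef
  refine ⟨σ, fun x y hxy =>
    (lt_iff_lt_of_cmp_eq_cmp (hI _ (hg x) _ (hg y) _ (hσ x) _ (hσ y))).1 hxy, funext fun x => ?_⟩
  have := hI _ (hg (a x)) _ (Order.mem_idealOfCofinals f₀ _) _ (hσ (a x)) (a x, b x)
    (mem_image_of_mem _ (mem_univ x))
  exact (cmp_eq_eq_iff _ _).1 (this.symm.trans (cmp_self_eq_eq _))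

theorem exists_iterate_ne {σ : α → α} (hσ : StrictMono σ) (a : Fin n → α) {x : α}
    (hx : x < σ x) : ∃ N ≤ n, ∀ q, σ^[N] (a q) ≠ x := by
  by_contra! h
  choose q hq using fun N : Fin (n + 1) => h N (Nat.lt_succ_iff.1 N.2)
  -- the orbit of `x` increases strictly, so no `a q` reaches `x` at two different times
  have hne (N M : Fin (n + 1)) (hNM : N < M) : q N ≠ q M := by
    intro hqNM
    have hpos : 0 < (M : ℕ) - N := Nat.sub_pos_of_lt hNM
    have hlt : x < σ^[M - N] x := by simpa using hσ.strictMono_iterate_of_lt_map hx hpos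
    have heq : σ^[M - N] x = x :=
      calc σ^[M - N] x = σ^[M - N] (σ^[N] (a (q M))) := by rw [← hqNM, hq N]
        _ = x := by rw [← iterate_add_apply, Nat.sub_add_cancel hNM.le, hq M]
    exact hlt.ne' heq
  have hinj : Injective q := fun N M hNM => by
    by_contra hNM'
    rcases lt_or_gt_of_ne hNM' with h | h
    exacts [hne N M h hNM, hne M N h hNM.symm]
  simpa using Fintype.card_le_of_injective q hinj

theorem exists_strictMonoOn_update_id [DenselyOrdered α] [NoMinOrder α] [NoMaxOrder α]
    (S : Finset α) (y : α) : ∃ x, y < x ∧ StrictMonoOn (update id y x) S := by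
  have : Nonempty α := ⟨y⟩
  obtain ⟨x, hyx, hxS⟩ := Order.exists_between_finsets {y} (S.filter (y < ·)) (by simp)
  refine ⟨x, hyx y (mem_singleton_self y), fun z hz w hw hzw => ?_⟩
  simp only [update_apply, id]
  split_ifs with hzy hwy hwy
  · exact absurd (hzy ▸ hwy ▸ hzw) (lt_irrefl _)
  · exact hxS w (mem_filter.2 ⟨hw, hzy ▸ hzw⟩)
  · exact (hwy ▸ hzw).trans (hyx y (mem_singleton_self y))
  · exact hzw

theorem exists_update_sameOrderType [DenselyOrdered α] [NoMinOrder α] [NoMaxOrder α]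
    {A w : Fin n → α} (hA : StrictMono A) {i : Fin n} (hw : ∀ q, w q ≠ A i) :
    ∃ u : Fin n → α, StrictMono u ∧ (∀ p ≠ i, u p = A p) ∧ A i < u i ∧
      SameOrderType (Sum.elim u w) (Sum.elim A w) := by
  set T := univ.image A ∪ univ.image w
  obtain ⟨x, hx, hk⟩ := exists_strictMonoOn_update_id T (A i)
  have hAT (p : Fin n) : A p ∈ T := mem_union_left _ (mem_image_of_mem _ (mem_univ p))
  have hGT : Set.range (Sum.elim A w) ⊆ T := by
    rintro _ ⟨p | p, rfl⟩
    exacts [hAT p, mem_union_right _ (mem_image_of_mem _ (mem_univ p))]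
  have hkw : update id (A i) x ∘ w = w := funext fun q => update_of_ne (hw q) _ _
  refine ⟨update id (A i) x ∘ A, fun p q hpq => hk (hAT p) (hAT q) (hA hpq),
    fun p hp => update_of_ne (hA.injective.ne hp) _ _, by simpa using hx, ?_⟩
  have := sameOrderType_comp_of_strictMonoOn (hk.mono hGT)
  rwa [Sum.comp_elim, hkw] at this

end Orbits

theorem exists_strictMono_comp_eq_orderEmbOfFin {α β : Type*} [LinearOrder α] [LinearOrder β]
    {e : β → α} (he : StrictMono e) {A : Finset α} (hA : #A = n) (hAe : ↑A ⊆ Set.range e) :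
    ∃ f : Fin n → β, StrictMono f ∧ e ∘ f = A.orderEmbOfFin hA := by
  choose f hf using fun p => hAe (A.orderEmbOfFin_mem hA p)
  refine ⟨f, fun p q hpq => he.lt_iff_lt.1 ?_, funext hf⟩
  rw [hf, hf]
  exact (A.orderEmbOfFin hA).strictMono hpq

variable {R : Type*}

def TypeHomogeneous (d : (Fin n → ℕ) → R) : Prop :=
  ∀ ⦃f g f' g' : Fin n → ℕ⦄, SameOrderType (Sum.elim f g) (Sum.elim f' g') →
    (d f = d g ↔ d f' = d g')

theorem exists_strictMono_typeHomogeneous (d : (Fin n → ℕ) → R) :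
    ∃ e : ℕ → ℕ, StrictMono e ∧ TypeHomogeneous fun f => d (e ∘ f) := by
  -- colour a `2n`-tuple by which pairs of its `n`-subtuples get the same colour
  obtain ⟨e, he, P, hP⟩ := exists_strictMono_forall_comp_eq (Fintype.card (Fin n ⊕ Fin n))
    fun E (s : Fin n ⊕ Fin n → Fin _) => d (E ∘ s ∘ Sum.inl) = d (E ∘ s ∘ Sum.inr)
  have key (f g : Fin n → ℕ) : ∃ s, (d (e ∘ f) = d (e ∘ g) ↔ P s) ∧
      ∀ x, (s x : ℕ) = #{y ∈ univ.image (Sum.elim f g) | y < Sum.elim f g x} := by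
    obtain ⟨E, hE, s, hs, hrank⟩ := exists_strictMono_comp_rank (Sum.elim f g)
    refine ⟨s, ?_, hrank⟩
    have hf : f = E ∘ s ∘ Sum.inl := by rw [← Sum.elim_comp_inl f g, hs]; rfl
    have hg : g = E ∘ s ∘ Sum.inr := by rw [← Sum.elim_comp_inr f g, hs]; rfl
    rw [← congrFun (hP E hE) s, hf, hg]
    rfl
  refine ⟨e, he, fun f g f' g' hτ => ?_⟩
  obtain ⟨s, hs, hrank⟩ := key f g
  obtain ⟨s', hs', hrank'⟩ := key f' g'
  have : s = s' := funext fun x => Fin.ext (by rw [hrank, hrank', hτ.card_filter_lt_eq])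
  rw [hs, hs', this]

def IsFree (d : (Fin n → ℕ) → R) (i : Fin n) : Prop :=
  ∃ f g : Fin n → ℕ, StrictMono f ∧ StrictMono g ∧ (∀ p ≠ i, f p = g p) ∧ f i < g i ∧ d f = d g

namespace TypeHomogeneous

variable {d : (Fin n → ℕ) → R}

theorem eq_of_isFree (hd : TypeHomogeneous d) {i : Fin n} (hi : IsFree d i) {f g : Fin n → ℕ}
    (hf : StrictMono f) (hg : StrictMono g) (hfg : ∀ p ≠ i, f p = g p) (hlt : f i < g i) :
    d f = d g := by
  obtain ⟨f₀, g₀, hf₀, hg₀, hfg₀, hlt₀, heq⟩ := hi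
  exact (hd (sameOrderType_of_eq_off hf₀ hg₀ hf hg hfg₀ hlt₀ hfg hlt)).1 heq

theorem eq_of_forall_not_isFree (hd : TypeHomogeneous d) {f g : Fin n → ℕ} (hf : StrictMono f)
    (hg : StrictMono g) (hfg : ∀ i, ¬IsFree d i → f i = g i) : d f = d g := by
  induction hk : #{p | f p ≠ g p} using Nat.strong_induction_on generalizing f g with
  | _ k ih =>
  by_cases heq : f = g
  · rw [heq]
  wlog hlt : ∃ j, f j < g j generalizing f g
  · obtain ⟨j, hj⟩ := Function.ne_iff.1 heq
    refine (this hg hf (fun i hi => (hfg i hi).symm) ?_ (Ne.symm heq) ?_).symm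
    · simpa only [ne_comm] using hk
    · exact ⟨j, hj.lt_or_gt.resolve_left fun h => hlt ⟨j, h⟩⟩
  obtain ⟨j, hj, hmono⟩ := exists_strictMono_update hf hg hlt
  have hfree : IsFree d j := by_contra fun h => hj.ne (hfg j h)
  rw [hd.eq_of_isFree hfree hf hmono (fun p hp => (update_of_ne hp _ _).symm)
    (by rwa [update_self])]
  have herase :
      ({p | update f j (g j) p ≠ g p} : Finset _) = ({p | f p ≠ g p} : Finset _).erase j := by
    ext p
    rcases eq_or_ne p j with rfl | hp <;> simp [*]
  refine ih _ ?_ hmono hg (fun i hi => ?_) rfl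
  · rw [herase, card_erase_of_mem (by simpa using hj.ne), hk]
    exact Nat.sub_lt (hk ▸ card_pos.2 ⟨j, by simpa using hj.ne⟩) one_pos
  · rcases eq_or_ne i j with rfl | hij
    · exact update_self ..
    · rw [update_of_ne hij]
      exact hfg i hi

theorem eq_comp_iterate {α : Type*} [LinearOrder α] (hd : TypeHomogeneous d) {a b : Fin n → ℕ}
    (hab : d a = d b) {A : Fin n → α} {σ : α → α} (hσ : StrictMono σ)
    (hA : SameOrderType (Sum.elim A (σ ∘ A)) (Sum.elim a b)) {φ : α → ℕ} {S : Set α}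
    (hφ : StrictMonoOn φ S) {N : ℕ} (hS : ∀ t ≤ N, ∀ p, σ^[t] (A p) ∈ S) :
    ∀ t ≤ N, d (φ ∘ A) = d (φ ∘ σ^[t] ∘ A) := by
  intro t ht
  induction t with
  | zero => rfl
  | succ t ih =>
    have hpair : Sum.elim (φ ∘ σ^[t] ∘ A) (φ ∘ σ^[t + 1] ∘ A) =
        (φ ∘ σ^[t]) ∘ Sum.elim A (σ ∘ A) := by
      rw [Sum.comp_elim, iterate_succ]
      rfl
    have hmaps : Set.MapsTo σ^[t] (Set.range (Sum.elim A (σ ∘ A))) S := by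
      rintro _ ⟨p | p, rfl⟩
      · exact hS t (by omega) p
      · simpa only [Sum.elim_inr, comp_apply, ← iterate_succ_apply] using hS (t + 1) ht p
    have hτ : SameOrderType (Sum.elim (φ ∘ σ^[t] ∘ A) (φ ∘ σ^[t + 1] ∘ A)) (Sum.elim a b) := by
      rw [hpair]
      exact (sameOrderType_comp_of_strictMonoOn
        (hφ.comp ((hσ.iterate t).strictMonoOn _) hmaps)).trans hA
    exact (ih (by omega)).trans ((hd hτ).2 hab)

theorem isFree_of_eq (hd : TypeHomogeneous d) {f g : Fin n → ℕ} (hf : StrictMono f)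
    (hg : StrictMono g) (hfg : d f = d g) {i : Fin n} (hi : f i < g i) : IsFree d i := by
  have hcast : StrictMono (Nat.cast : ℕ → ℚ) := Nat.strictMono_cast
  set A : Fin n → ℚ := Nat.cast ∘ f
  have hA : StrictMono A := hcast.comp hf
  obtain ⟨σ, hσ, hσA⟩ := ((sameOrderType_comp_of_strictMono hA id).trans
    (sameOrderType_comp_of_strictMono (hcast.comp hg) id).symm).exists_strictMono_comp_eq
  simp only [comp_id] at hσA
  obtain ⟨N, -, hN⟩ := exists_iterate_ne hσ A (x := A i) (by
    rw [← comp_apply (f := σ), hσA]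
    exact hcast hi)
  set w := σ^[N] ∘ A
  obtain ⟨u, hu, huA, hui, hτ⟩ := exists_update_sameOrderType hA hN
  let S : Finset ℚ := (range (N + 1)).biUnion (fun t => univ.image (σ^[t] ∘ A)) ∪ univ.image u
  have hS (t : ℕ) (ht : t ≤ N) (p : Fin n) : σ^[t] (A p) ∈ S :=
    mem_union_left _ (mem_biUnion.2 ⟨t, mem_range.2 (by omega), mem_image_of_mem _ (mem_univ p)⟩)
  have hAS (p : Fin n) : A p ∈ S := hS 0 (Nat.zero_le _) p
  have huS (p : Fin n) : u p ∈ S := mem_union_right _ (mem_image_of_mem _ (mem_univ p))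
  set φ := fun y => #{z ∈ S | z < y}
  have hφ : StrictMonoOn φ S := strictMonoOn_card_filter_lt S
  have hchain := hd.eq_comp_iterate hfg hσ (by
      rw [hσA, ← Sum.comp_elim]
      exact sameOrderType_comp_of_strictMono hcast _) hφ (fun t ht p => hS t ht p) N le_rfl
  have hφτ := hτ.comp_of_strictMonoOn hφ
    (by rintro _ ⟨p | p, rfl⟩; exacts [huS p, hS N le_rfl p])
    (by rintro _ ⟨p | p, rfl⟩; exacts [hAS p, hS N le_rfl p])
  rw [Sum.comp_elim, Sum.comp_elim] at hφτ
  refine ⟨φ ∘ A, φ ∘ u, fun p q hpq => hφ (hAS p) (hAS q) (hA hpq),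
    fun p q hpq => hφ (huS p) (huS q) (hu hpq), fun p hp => by simp only [comp_apply, huA p hp],
    hφ (hAS i) (huS i) hui, hchain.trans ((hd hφτ).2 hchain).symm⟩

theorem exists_canonical (hd : TypeHomogeneous d) :
    ∃ I : Finset (Fin n), ∀ f g : Fin n → ℕ, StrictMono f → StrictMono g →
      (d f = d g ↔ ∀ i ∈ I, f i = g i) := by
  classical
  refine ⟨univ.filter fun i => ¬IsFree d i, fun f g hf hg => ⟨fun h i hi => ?_,
    fun h => hd.eq_of_forall_not_isFree hf hg fun i hi => h i (by simpa using hi)⟩⟩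
  have hi : ¬IsFree d i := (mem_filter.1 hi).2
  rcases lt_trichotomy (f i) (g i) with hlt | heq | hlt
  · exact absurd (hd.isFree_of_eq hf hg h hlt) hi
  · exact heq
  · exact absurd (hd.isFree_of_eq hg hf h.symm hlt) hi

end TypeHomogeneous

end CanonicalRamsey

open CanonicalRamsey

/-- Erdős–Rado canonical theorem for `[ω]^n`. -/
theorem erdos_rado_canonical {R : Type*} (n : ℕ) (c : Finset ℕ → R) :
    ∃ X : Set ℕ, X.Infinite ∧ ∃ I : Finset (Fin n),
      ∀ (A B : Finset ℕ) (hA : A.card = n) (hB : B.card = n),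
        (↑A : Set ℕ) ⊆ X → (↑B : Set ℕ) ⊆ X →
        (c A = c B ↔ ∀ i ∈ I, A.orderEmbOfFin hA i = B.orderEmbOfFin hB i) := by
  obtain ⟨e, he, hd⟩ := exists_strictMono_typeHomogeneous fun f : Fin n → ℕ => c (univ.image f)
  obtain ⟨I, hI⟩ := hd.exists_canonical
  refine ⟨Set.range e, Set.infinite_range_of_injective he.injective, I,
    fun A B hA hB hAX hBX => ?_⟩
  obtain ⟨f, hf, hfA⟩ := exists_strictMono_comp_eq_orderEmbOfFin he hA hAX
  obtain ⟨g, hg, hgB⟩ := exists_strictMono_comp_eq_orderEmbOfFin he hB hBX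
  have hcA : c A = c (univ.image (e ∘ f)) := by rw [hfA, image_orderEmbOfFin_univ]
  have hcB : c B = c (univ.image (e ∘ g)) := by rw [hgB, image_orderEmbOfFin_univ]
  rw [hcA, hcB, hI f g hf hg, ← hfA, ← hgB]
  simp only [comp_apply, he.injective.eq_iff]
end

section
/- The canonization of colorings of 1-element strong subtrees: for any coloring c of the nodes of an infinite b-branching tree U (into an arbitrary set), there is an infinite strong subtree T of U such that c restricted to the nodes of T is constant, one-to-one, or satisfies c(s) = c(t) iff s and t have the same height. -/
/-- `l'` is the immediate successor of `l` in the level set `L`. -/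
def NextLvl (L : Set ℕ) (l l' : ℕ) : Prop :=
  l ∈ L ∧ l' ∈ L ∧ l < l' ∧ ∀ m ∈ L, m ≤ l ∨ l' ≤ m

/-- `S` is a strong subtree of the complete `b`-branching tree `b^{<ω}` (nodes being
lists over `Fin b`, ordered by the prefix relation) with level set `L`:
all nodes of `S` lie on the levels in `L`, each level of `L` is attained, there is a
unique root (node at the least level), every node has, for each direction `i : Fin b`,
exactly one successor at the next level extending it in direction `i`, and every node
at a non-minimal level comes from a node at the previous level in this way. -/
def IsStrongSub (b : ℕ) (S : Set (List (Fin b))) (L : Set ℕ) : Prop :=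
  (∀ s ∈ S, s.length ∈ L) ∧
  (∀ l ∈ L, ∃ s ∈ S, s.length = l) ∧
  (∀ s ∈ S, ∀ t ∈ S, IsLeast L s.length → IsLeast L t.length → s = t) ∧
  (∀ s ∈ S, ∀ l' : ℕ, NextLvl L s.length l' → ∀ i : Fin b,
      ∃! t : List (Fin b), t ∈ S ∧ t.length = l' ∧ s ++ [i] <+: t) ∧
  (∀ t ∈ S, ∀ l : ℕ, NextLvl L l t.length →
      ∃ s ∈ S, ∃ i : Fin b, s.length = l ∧ s ++ [i] <+: t)

/-!
After a strong embedding of the full tree into `U` we may assume that `U` is the full tree.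
If above every node the number of colours met at level `m` tends to infinity, Hall's theorem
extends all nodes of a level to a common higher level with pairwise distinct colours that are
not used below, and fusing these choices level by level yields an injectively coloured strong
subtree. Otherwise take a node `t` and a bound `n`, with `n` minimal, such that infinitely many
levels above `t` carry fewer than `n` colours; by minimality all extensions of `t` see the same
colours at almost all of these levels, so a strong subtree with monochromatic levels can be
fused. The canonical Ramsey theorem for `ℕ`, applied to the level colours, finishes.
-/

open Filter

section

variable {b : ℕ} {R : Type*}

theorem List.eq_of_prefix_of_length_eq {α : Type*} {l₁ l₂ l : List α} (h₁ : l₁ <+: l)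
    (h₂ : l₂ <+: l) (h : l₁.length = l₂.length) : l₁ = l₂ :=
  (List.prefix_of_prefix_length_le h₁ h₂ h.le).eq_of_length h

theorem exists_prefix_length_eq (hb : 0 < b) (z : List (Fin b)) {m : ℕ} (h : z.length ≤ m) :
    ∃ y, z <+: y ∧ y.length = m :=
  ⟨z ++ List.replicate (m - z.length) ⟨0, hb⟩, List.prefix_append _ _, by simp; omega⟩

theorem Set.Infinite.sInf_ge_spec {S : Set ℕ} (hS : S.Infinite) (n : ℕ) :
    sInf {m | m ∈ S ∧ n ≤ m} ∈ S ∧ n ≤ sInf {m | m ∈ S ∧ n ≤ m} :=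
  let ⟨m, hm, hnm⟩ := hS.exists_gt n
  Nat.sInf_mem (s := {m | m ∈ S ∧ n ≤ m}) ⟨m, hm, hnm.le⟩

theorem exists_infinite_const_or_injOn {ι α : Type*} [Infinite ι] (h : ι → α) :
    ∃ S : Set ι, S.Infinite ∧ ((∀ i ∈ S, ∀ j ∈ S, h i = h j) ∨ S.InjOn h) := by
  by_cases hfib : ∃ r, (h ⁻¹' {r}).Infinite
  · obtain ⟨r, hr⟩ := hfib
    exact ⟨_, hr, Or.inl fun i hi j hj => hi.trans hj.symm⟩
  · push Not at hfib
    obtain ⟨S, -, hinj, hS⟩ := (Set.surjOn_image h Set.univ).exists_subset_injOn_image_eq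
    refine ⟨S, Set.Infinite.of_image h ?_, Or.inr hinj⟩
    rw [hS, Set.image_univ]
    intro hfin
    exact Set.infinite_univ (by simpa using hfin.preimage' fun r _ => hfib r)

theorem nextLvl_range_iff {g : ℕ → ℕ} (hg : StrictMono g) {j k : ℕ} :
    NextLvl (Set.range g) (g j) (g k) ↔ k = j + 1 := by
  constructor
  · rintro ⟨-, -, hjk, hnext⟩
    have hjk := hg.lt_iff_lt.1 hjk
    rcases hnext _ ⟨j + 1, rfl⟩ with h | h
    · exact absurd (hg.le_iff_le.1 h) (by omega)
    · have := hg.le_iff_le.1 h; omega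
  · rintro rfl
    refine ⟨⟨j, rfl⟩, ⟨j + 1, rfl⟩, hg (by omega), ?_⟩
    rintro _ ⟨m, rfl⟩
    rcases le_or_gt m j with h | h
    · exact Or.inl (hg.monotone h)
    · exact Or.inr (hg.monotone h)

structure IsStrongEmbedding (f : List (Fin b) → List (Fin b)) (g : ℕ → ℕ) : Prop where
  strictMono : StrictMono g
  length_apply : ∀ s, (f s).length = g s.length
  append_prefix : ∀ s i, f s ++ [i] <+: f (s ++ [i])

namespace IsStrongEmbedding

variable {f f' : List (Fin b) → List (Fin b)} {g g' : ℕ → ℕ}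

theorem mono (hf : IsStrongEmbedding f g) {s t : List (Fin b)} (h : s <+: t) : f s <+: f t := by
  induction t using List.reverseRecOn with
  | nil => rw [List.prefix_nil.1 h]
  | append_singleton t i ih =>
    rcases List.prefix_concat_iff.1 h with rfl | h
    · exact List.prefix_rfl
    · exact (ih h).trans ((List.prefix_append _ _).trans (hf.append_prefix t i))

theorem length_eq_of_apply_eq (hf : IsStrongEmbedding f g) {s t : List (Fin b)}
    (h : f s = f t) : s.length = t.length :=
  hf.strictMono.injective (by rw [← hf.length_apply, h, hf.length_apply])

theorem injective (hf : IsStrongEmbedding f g) : Function.Injective f := by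
  intro s t hst
  induction s using List.reverseRecOn generalizing t with
  | nil => exact (List.length_eq_zero_iff.1 (hf.length_eq_of_apply_eq hst).symm).symm
  | append_singleton s i ih =>
    have hlen := hf.length_eq_of_apply_eq hst
    obtain rfl | ⟨t, j, rfl⟩ := t.eq_nil_or_concat'
    · simp at hlen
    have heq : f s ++ [i] = f t ++ [j] :=
      List.eq_of_prefix_of_length_eq (hf.append_prefix s i) (hst ▸ hf.append_prefix t j)
        (by simp_all [hf.length_apply])
    obtain ⟨hst', rfl⟩ := List.append_singleton_inj.1 heq
    rw [ih hst']

theorem comp (hf : IsStrongEmbedding f g) (hf' : IsStrongEmbedding f' g') :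
    IsStrongEmbedding (f ∘ f') (g ∘ g') where
  strictMono := hf.strictMono.comp hf'.strictMono
  length_apply s := by simp [hf.length_apply, hf'.length_apply]
  append_prefix s i := (hf.append_prefix _ i).trans (hf.mono (hf'.append_prefix s i))

theorem isStrongSub_range (hb : 0 < b) (hf : IsStrongEmbedding f g) :
    IsStrongSub b (Set.range f) (Set.range g) := by
  have hnext {j k : ℕ} := nextLvl_range_iff hf.strictMono (j := j) (k := k)
  have hleast : ∀ k, IsLeast (Set.range g) (g k) → k = 0 := fun k hk =>
    Nat.le_zero.1 (hf.strictMono.le_iff_le.1 (hk.2 ⟨0, rfl⟩))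
  refine ⟨?_, ?_, ?_, ?_, ?_⟩
  · rintro _ ⟨s, rfl⟩
    exact ⟨s.length, (hf.length_apply s).symm⟩
  · rintro _ ⟨k, rfl⟩
    exact ⟨f (List.replicate k ⟨0, hb⟩), ⟨_, rfl⟩, by simp [hf.length_apply]⟩
  · rintro _ ⟨s, rfl⟩ _ ⟨t, rfl⟩ hs ht
    rw [hf.length_apply] at hs ht
    rw [List.length_eq_zero_iff.1 (hleast _ hs), List.length_eq_zero_iff.1 (hleast _ ht)]
  · rintro _ ⟨s, rfl⟩ _ hl i
    obtain ⟨k, rfl⟩ := hl.2.1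
    rw [hf.length_apply, hnext] at hl
    subst hl
    refine ⟨f (s ++ [i]), ⟨⟨_, rfl⟩, by simp [hf.length_apply], hf.append_prefix s i⟩,
      ?_⟩
    rintro _ ⟨⟨t, rfl⟩, ht, hpre⟩
    rw [hf.length_apply] at ht
    replace ht := hf.strictMono.injective ht
    obtain rfl | ⟨t, j, rfl⟩ := t.eq_nil_or_concat'
    · simp at ht
    have heq : f s ++ [i] = f t ++ [j] :=
      List.eq_of_prefix_of_length_eq hpre (hf.append_prefix t j) (by simp_all [hf.length_apply])
    obtain ⟨hst, rfl⟩ := List.append_singleton_inj.1 heq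
    rw [hf.injective hst]
  · rintro _ ⟨t, rfl⟩ _ hl
    obtain ⟨k, rfl⟩ := hl.1
    rw [hf.length_apply, hnext] at hl
    obtain rfl | ⟨s, i, rfl⟩ := t.eq_nil_or_concat'
    · simp at hl
    refine ⟨f s, ⟨s, rfl⟩, i, ?_, hf.append_prefix s i⟩
    simp only [List.length_append, List.length_singleton, add_left_inj] at hl
    rw [hf.length_apply, hl]

end IsStrongEmbedding

def grow (r : List (Fin b)) (ψ : List (Fin b) → List (Fin b)) (s : List (Fin b)) :
    List (Fin b) :=
  s.foldl (fun y i => ψ (y ++ [i])) r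

@[simp]
theorem grow_append_singleton (r : List (Fin b)) (ψ : List (Fin b) → List (Fin b))
    (s : List (Fin b)) (i : Fin b) : grow r ψ (s ++ [i]) = ψ (grow r ψ s ++ [i]) := by
  simp [grow, List.foldl_append]

theorem isStrongEmbedding_grow (hb : 0 < b) (r : List (Fin b)) {ψ : List (Fin b) → List (Fin b)}
    {ℓ : ℕ → ℕ} (hψ : ∀ z, z <+: ψ z) (hℓ : ∀ z, (ψ z).length = ℓ z.length) :
    IsStrongEmbedding (grow r ψ) fun k => (fun n => ℓ (n + 1))^[k] r.length where
  strictMono := by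
    refine strictMono_nat_of_lt_succ fun k => ?_
    rw [Function.iterate_succ_apply']
    have := (hψ (List.replicate ((fun n => ℓ (n + 1))^[k] r.length + 1) ⟨0, hb⟩)).length_le
    rw [hℓ] at this
    simpa using this
  length_apply s := by
    induction s using List.reverseRecOn with
    | nil => rfl
    | append_singleton s i ih =>
      simp [hℓ, ih, Function.iterate_succ_apply']
  append_prefix s i := by
    rw [grow_append_singleton]
    exact hψ _

theorem exists_isStrongEmbedding_mem (hb : 0 < b) {U : Set (List (Fin b))} {LU : Set ℕ}
    (hU : IsStrongSub b U LU) (hLU : LU.Infinite) :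
    ∃ f g, IsStrongEmbedding f g ∧ ∀ s, f s ∈ U := by
  obtain ⟨hUlen, hUlevel, -, hUsucc, -⟩ := hU
  set ℓ : ℕ → ℕ := fun n => sInf {m | m ∈ LU ∧ n ≤ m}
  have hnext : ∀ u ∈ U, NextLvl LU u.length (ℓ (u.length + 1)) := by
    intro u hu
    obtain ⟨hmem, hle⟩ := hLU.sInf_ge_spec (u.length + 1)
    refine ⟨hUlen u hu, hmem, hle, fun m hm => ?_⟩
    rcases le_or_gt m u.length with h | h
    · exact Or.inl h
    · exact Or.inr (Nat.sInf_le ⟨hm, h⟩)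
  have hψ : ∀ z, ∃ y, z <+: y ∧ y.length = ℓ z.length ∧
      ((∃ u ∈ U, ∃ i, z = u ++ [i]) → y ∈ U) := by
    intro z
    by_cases hz : ∃ u ∈ U, ∃ i, z = u ++ [i]
    · obtain ⟨u, hu, i, rfl⟩ := hz
      obtain ⟨y, ⟨hyU, hylen, hzy⟩, -⟩ := hUsucc u hu _ (hnext u hu) i
      exact ⟨y, hzy, by simpa using hylen, fun _ => hyU⟩
    · obtain ⟨y, hzy, hylen⟩ := exists_prefix_length_eq hb z (hLU.sInf_ge_spec z.length).2
      exact ⟨y, hzy, hylen, fun h => absurd h hz⟩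
  choose ψ hψz hψℓ hψU using hψ
  obtain ⟨r, hrU, -⟩ := hUlevel _ (hLU.sInf_ge_spec 0).1
  refine ⟨grow r ψ, _, isStrongEmbedding_grow hb r hψz hψℓ, fun s => ?_⟩
  induction s using List.reverseRecOn with
  | nil => exact hrU
  | append_singleton s i ih => exact grow_append_singleton r ψ s i ▸ hψU _ ⟨_, ih, i, rfl⟩

theorem exists_isStrongEmbedding_levels_mem (hb : 0 < b) {S : Set ℕ} (hS : S.Infinite) :
    ∃ f g, IsStrongEmbedding (b := b) f g ∧ ∀ k, g k ∈ S := by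
  set ℓ : ℕ → ℕ := fun n => sInf {m | m ∈ S ∧ n ≤ m}
  have hψ : ∀ z : List (Fin b), ∃ y, z <+: y ∧ y.length = ℓ z.length :=
    fun z => exists_prefix_length_eq hb z (hS.sInf_ge_spec z.length).2
  choose ψ hψz hψℓ using hψ
  obtain ⟨r, -, hr⟩ := exists_prefix_length_eq hb [] (hS.sInf_ge_spec 0).2
  have hf := isStrongEmbedding_grow hb r hψz hψℓ
  refine ⟨_, _, hf, fun k => ?_⟩
  cases k with
  | zero => exact hr ▸ (hS.sInf_ge_spec 0).1
  | succ k => exact Function.iterate_succ_apply' .. ▸ (hS.sInf_ge_spec _).1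

/-- Junk value `{c z}` when `m < z.length`. -/
def colorsAbove [DecidableEq R] (c : List (Fin b) → R) (z : List (Fin b)) (m : ℕ) : Finset R :=
  Finset.univ.image fun w : List.Vector (Fin b) (m - z.length) => c (z ++ w.toList)

section colorsAbove

variable [DecidableEq R] {c : List (Fin b) → R}

theorem mem_colorsAbove {z : List (Fin b)} {m : ℕ} (h : z.length ≤ m) {ρ : R} :
    ρ ∈ colorsAbove c z m ↔ ∃ y, z <+: y ∧ y.length = m ∧ c y = ρ := by
  simp only [colorsAbove, Finset.mem_image, Finset.mem_univ, true_and]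
  constructor
  · rintro ⟨w, rfl⟩
    exact ⟨_, List.prefix_append _ _, by simp; omega, rfl⟩
  · rintro ⟨_, ⟨w, rfl⟩, hlen, rfl⟩
    exact ⟨⟨w, by simp at hlen; omega⟩, rfl⟩

theorem colorsAbove_nonempty (hb : 0 < b) {z : List (Fin b)} {m : ℕ} (h : z.length ≤ m) :
    (colorsAbove c z m).Nonempty :=
  let ⟨y, hzy, hy⟩ := exists_prefix_length_eq hb z h
  ⟨c y, (mem_colorsAbove h).2 ⟨y, hzy, hy, rfl⟩⟩

theorem colorsAbove_subset {t x : List (Fin b)} {m : ℕ} (htx : t <+: x) (h : x.length ≤ m) :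
    colorsAbove c x m ⊆ colorsAbove c t m := by
  intro ρ hρ
  obtain ⟨y, hxy, hy, rfl⟩ := (mem_colorsAbove h).1 hρ
  exact (mem_colorsAbove (htx.length_le.trans h)).2 ⟨y, htx.trans hxy, hy, rfl⟩

end colorsAbove

def IsLevelish (c : List (Fin b) → R) (t : List (Fin b)) : Prop :=
  ∀ l, ∃ᶠ m in atTop, ∃ ρ, ∀ x, t <+: x → x.length = l →
    ∃ y, x <+: y ∧ y.length = m ∧ c y = ρ

theorem exists_isLevelish [DecidableEq R] (hb : 0 < b) {c : List (Fin b) → R}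
    (h : ∃ z C, ∃ᶠ m in atTop, (colorsAbove c z m).card < C) : ∃ t, IsLevelish c t := by
  classical
  have h' : ∃ C z, ∃ᶠ m in atTop, (colorsAbove c z m).card < C :=
    let ⟨z, C, hz⟩ := h; ⟨C, z, hz⟩
  obtain ⟨t, ht⟩ := Nat.find_spec h'
  have hpos : 0 < Nat.find h' := let ⟨_, hm⟩ := ht.exists; (Nat.zero_le _).trans_lt hm
  -- by minimality of the bound, the colour sets above `t` cannot shrink infinitely often
  have hstable : ∀ x, t <+: x → ∀ᶠ m in atTop,
      (colorsAbove c t m).card < Nat.find h' → colorsAbove c x m = colorsAbove c t m := by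
    intro x htx
    by_contra hx
    suffices ∃ᶠ m in atTop, (colorsAbove c x m).card < Nat.find h' - 1 by
      have := Nat.find_min' h' ⟨x, this⟩
      omega
    refine ((not_eventually.1 hx).and_eventually (eventually_ge_atTop x.length)).mono ?_
    rintro m ⟨hm, hxm⟩
    push Not at hm
    have := Finset.card_lt_card ((colorsAbove_subset htx hxm).ssubset_of_ne hm.2)
    omega
  refine ⟨t, fun l => ?_⟩
  have hall : ∀ᶠ m in atTop, ∀ v : List.Vector (Fin b) l, t <+: v.toList →
      (colorsAbove c t m).card < Nat.find h' → colorsAbove c v.toList m = colorsAbove c t m :=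
    eventually_all.2 fun v => by
      by_cases htv : t <+: v.toList
      · exact (hstable _ htv).mono fun m hm _ => hm
      · exact Eventually.of_forall fun m h => absurd h htv
  refine (ht.and_eventually (hall.and (eventually_ge_atTop (max l t.length)))).mono ?_
  rintro m ⟨hcard, hstab, hm⟩
  obtain ⟨ρ, hρ⟩ := colorsAbove_nonempty (c := c) hb (le_of_max_le_right hm)
  refine ⟨ρ, fun x htx hx => ?_⟩
  rw [← hstab ⟨x, hx⟩ htx hcard] at hρ
  exact (mem_colorsAbove (hx ▸ le_of_max_le_left hm)).1 hρ

theorem exists_isStrongEmbedding_levelwise_const (hb : 0 < b) {c : List (Fin b) → R}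
    {t : List (Fin b)} (ht : IsLevelish c t) :
    ∃ f g, IsStrongEmbedding f g ∧ ∀ s s', s.length = s'.length → c (f s) = c (f s') := by
  have hlevel : ∀ n, ∃ m ρ, n ≤ m ∧
      ∀ x, t <+: x → x.length = n → ∃ y, x <+: y ∧ y.length = m ∧ c y = ρ := fun n =>
    let ⟨m, ⟨ρ, hρ⟩, hm⟩ := ((ht n).and_eventually (eventually_ge_atTop n)).exists
    ⟨m, ρ, hm, hρ⟩
  choose ℓ ρ hℓn hℓ using hlevel
  have hψ : ∀ z, ∃ y, z <+: y ∧ y.length = ℓ z.length ∧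
      (t <+: z → c y = ρ z.length) := by
    intro z
    by_cases htz : t <+: z
    · obtain ⟨y, hzy, hy, hcy⟩ := hℓ _ z htz rfl
      exact ⟨y, hzy, hy, fun _ => hcy⟩
    · obtain ⟨y, hzy, hy⟩ := exists_prefix_length_eq hb z (hℓn _)
      exact ⟨y, hzy, hy, fun h => absurd h htz⟩
  choose ψ hψz hψℓ hψc using hψ
  have hf := isStrongEmbedding_grow hb t hψz hψℓ
  have hcolor : ∀ s i, c (grow t ψ (s ++ [i])) = ρ ((grow t ψ s).length + 1) := fun s i => by
    rw [grow_append_singleton, hψc _ ((hf.mono s.nil_prefix).trans (List.prefix_append _ _))]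
    simp
  refine ⟨_, _, hf, fun s s' hss' => ?_⟩
  obtain rfl | ⟨s, i, rfl⟩ := s.eq_nil_or_concat' <;>
    obtain rfl | ⟨s', i', rfl⟩ := s'.eq_nil_or_concat' <;> simp at hss'
  · rfl
  · rw [hcolor, hcolor, hf.length_apply, hf.length_apply, hss']

theorem exists_rainbow_extensions [DecidableEq R] {c : List (Fin b) → R}
    (hc : ∀ z C, ∀ᶠ m in atTop, C ≤ (colorsAbove c z m).card) (n : ℕ) :
    ∃ m, ∃ y : List (Fin b) → List (Fin b), ∀ z, z.length = n →
      z <+: y z ∧ (y z).length = m ∧ (∀ x, x.length < n → c (y z) ≠ c x) ∧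
      ∀ z', z'.length = n → c (y z) = c (y z') → z = z' := by
  set old := (Finset.range n).biUnion (colorsAbove c [])
  have hold : ∀ x, x.length < n → c x ∈ old := fun x hx =>
    Finset.mem_biUnion.2 ⟨_, Finset.mem_range.2 hx,
      (mem_colorsAbove (Nat.zero_le _)).2 ⟨x, x.nil_prefix, rfl, rfl⟩⟩
  obtain ⟨m, hm, hnm⟩ := ((eventually_all.2 fun v : List.Vector (Fin b) n =>
    hc v.toList (Fintype.card (List.Vector (Fin b) n) + old.card)).and
      (eventually_ge_atTop n)).exists
  -- Hall's condition holds because each node alone already sees enough new colours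
  have hall : ∀ A : Finset (List.Vector (Fin b) n),
      A.card ≤ (A.biUnion fun v => colorsAbove c v.toList m \ old).card := by
    intro A
    obtain rfl | ⟨v, hv⟩ := A.eq_empty_or_nonempty
    · simp
    calc A.card ≤ Fintype.card (List.Vector (Fin b) n) := A.card_le_univ
      _ ≤ (colorsAbove c v.toList m \ old).card := by
          have := Finset.le_card_sdiff old (colorsAbove c v.toList m)
          have := hm v
          omega
      _ ≤ (A.biUnion fun v => colorsAbove c v.toList m \ old).card :=
          Finset.card_le_card (Finset.subset_biUnion_of_mem
            (fun v : List.Vector (Fin b) n => colorsAbove c v.toList m \ old) hv)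
  obtain ⟨σ, hσinj, hσ⟩ := (Finset.all_card_le_biUnion_card_iff_exists_injective _).1 hall
  have hy : ∀ v : List.Vector (Fin b) n, ∃ y, v.toList <+: y ∧ y.length = m ∧ c y = σ v :=
    fun v => (mem_colorsAbove (by simpa using hnm)).1 (Finset.mem_sdiff.1 (hσ v)).1
  choose y hyz hym hyc using hy
  refine ⟨m, fun z => if hz : z.length = n then y ⟨z, hz⟩ else z, fun z hz => ?_⟩
  simp only [hz, dite_true]
  refine ⟨hyz ⟨z, hz⟩, hym _, fun x hx hcx => ?_, fun z' hz' hcz => ?_⟩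
  · exact (Finset.mem_sdiff.1 (hσ ⟨z, hz⟩)).2 (hyc ⟨z, hz⟩ ▸ hcx ▸ hold x hx)
  · simp only [hz', dite_true] at hcz
    exact congrArg List.Vector.toList
      (hσinj ((hyc ⟨z, hz⟩).symm.trans (hcz.trans (hyc ⟨z', hz'⟩))))

theorem exists_isStrongEmbedding_injective [DecidableEq R] (hb : 0 < b) {c : List (Fin b) → R}
    (hc : ∀ z C, ∀ᶠ m in atTop, C ≤ (colorsAbove c z m).card) :
    ∃ f g, IsStrongEmbedding f g ∧ Function.Injective (c ∘ f) := by
  choose ℓ Y hY using exists_rainbow_extensions hc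
  set ψ : List (Fin b) → List (Fin b) := fun z => Y z.length z
  have hf := isStrongEmbedding_grow hb [] (ψ := ψ) (fun z => (hY _ z rfl).1)
    fun z => (hY _ z rfl).2.1
  have hnew : ∀ s u i, s.length ≤ u.length →
      c (grow [] ψ s) ≠ c (grow [] ψ (u ++ [i])) := by
    intro s u i hsu
    rw [grow_append_singleton]
    refine ((hY _ _ rfl).2.2.1 _ ?_).symm
    simpa [hf.length_apply] using hf.strictMono.monotone hsu
  have hlevel : ∀ s s', s.length = s'.length →
      c (grow [] ψ s) = c (grow [] ψ s') → s = s' := by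
    intro s s' hss' hcs
    obtain rfl | ⟨s, i, rfl⟩ := s.eq_nil_or_concat' <;>
      obtain rfl | ⟨s', i', rfl⟩ := s'.eq_nil_or_concat' <;> simp at hss'
    · rfl
    simp only [grow_append_singleton] at hcs
    have hlen : (grow [] ψ s' ++ [i']).length = (grow [] ψ s ++ [i]).length := by
      simp [hf.length_apply, hss']
    obtain ⟨h, rfl⟩ :=
      List.append_singleton_inj.1 ((hY _ _ rfl).2.2.2 _ hlen (by simpa [ψ, hlen] using hcs))
    rw [hf.injective h]
  refine ⟨_, _, hf, fun s s' hcs => ?_⟩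
  rcases lt_trichotomy s.length s'.length with h | h | h
  · obtain rfl | ⟨u, i, rfl⟩ := s'.eq_nil_or_concat'
    · simp at h
    exact absurd hcs (hnew s u i (by simpa [Nat.lt_succ_iff] using h))
  · exact hlevel s s' h hcs
  · obtain rfl | ⟨u, i, rfl⟩ := s.eq_nil_or_concat'
    · simp at h
    exact absurd hcs.symm (hnew s' u i (by simpa [Nat.lt_succ_iff] using h))

theorem exists_isStrongEmbedding_const_or_eq_iff (hb : 0 < b) {c : List (Fin b) → R}
    {f : List (Fin b) → List (Fin b)} {g : ℕ → ℕ} (hf : IsStrongEmbedding f g)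
    (hc : ∀ s s', s.length = s'.length → c (f s) = c (f s')) :
    ∃ f' g', IsStrongEmbedding f' g' ∧ ((∀ s s', c (f' s) = c (f' s')) ∨
      ∀ s s', c (f' s) = c (f' s') ↔ s.length = s'.length) := by
  set h : ℕ → R := fun k => c (f (List.replicate k ⟨0, hb⟩))
  obtain ⟨S, hS, hSh⟩ := exists_infinite_const_or_injOn h
  obtain ⟨p, gp, hp, hgp⟩ := exists_isStrongEmbedding_levels_mem hb hS
  have hcp : ∀ s, c ((f ∘ p) s) = h (gp s.length) := fun s =>
    hc _ _ (by simp [hp.length_apply])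
  refine ⟨f ∘ p, g ∘ gp, hf.comp hp, ?_⟩
  simp only [hcp]
  rcases hSh with hconst | hinj
  · exact Or.inl fun s s' => hconst _ (hgp _) _ (hgp _)
  · exact Or.inr fun s s' => (hinj.eq_iff (hgp _) (hgp _)).trans hp.strictMono.injective.eq_iff

theorem exists_isStrongEmbedding_canonical (hb : 0 < b) (c : List (Fin b) → R) :
    ∃ f g, IsStrongEmbedding f g ∧ ((∀ s s', c (f s) = c (f s')) ∨
      Function.Injective (c ∘ f) ∨ ∀ s s', c (f s) = c (f s') ↔ s.length = s'.length) := by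
  classical
  by_cases hc : ∀ z C, ∀ᶠ m in atTop, C ≤ (colorsAbove c z m).card
  · obtain ⟨f, g, hf, hinj⟩ := exists_isStrongEmbedding_injective hb hc
    exact ⟨f, g, hf, Or.inr (Or.inl hinj)⟩
  · push Not at hc
    obtain ⟨t, ht⟩ := exists_isLevelish hb hc
    obtain ⟨f, g, hf, hlevel⟩ := exists_isStrongEmbedding_levelwise_const hb ht
    obtain ⟨f', g', hf', h | h⟩ := exists_isStrongEmbedding_const_or_eq_iff hb hf hlevel
    · exact ⟨f', g', hf', Or.inl h⟩
    · exact ⟨f', g', hf', Or.inr (Or.inr h)⟩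

end

/-- Canonization of node colorings (the case `n = 1` of Milliken's canonical theorem):
for any coloring of the nodes of an infinite `b`-branching tree `U` there is an infinite
strong subtree `T` on whose nodes the coloring is constant, one-to-one, or determined
exactly by the height. -/
theorem node_coloring_canonical {R : Type*} (b : ℕ) (hb : 0 < b)
    (U : Set (List (Fin b))) (LU : Set ℕ)
    (hU : IsStrongSub b U LU) (hLU : LU.Infinite) (c : List (Fin b) → R) :
    ∃ (T : Set (List (Fin b))) (LT : Set ℕ),
      IsStrongSub b T LT ∧ LT.Infinite ∧ T ⊆ U ∧ LT ⊆ LU ∧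
      ((∀ s ∈ T, ∀ t ∈ T, c s = c t) ∨
        Set.InjOn c T ∨
        (∀ s ∈ T, ∀ t ∈ T, (c s = c t ↔ s.length = t.length))) := by
  obtain ⟨e, gU, he, heU⟩ := exists_isStrongEmbedding_mem hb hU hLU
  obtain ⟨f, g, hf, hcf⟩ := exists_isStrongEmbedding_canonical hb (c ∘ e)
  have hF := he.comp hf
  refine ⟨Set.range (e ∘ f), Set.range (gU ∘ g), hF.isStrongSub_range hb,
    Set.infinite_range_of_injective hF.strictMono.injective,
    Set.range_subset_iff.2 fun s => heU _, ?_, ?_⟩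
  · rintro _ ⟨k, rfl⟩
    have hk := hF.length_apply (List.replicate k ⟨0, hb⟩)
    rw [List.length_replicate] at hk
    exact hk ▸ hU.1 _ (heU _)
  simp only [Set.InjOn, Set.forall_mem_range, hF.length_apply, hF.strictMono.injective.eq_iff]
  exact hcf.imp id (Or.imp (fun h s t hst => congrArg (e ∘ f) (h hst)) id)
end

section
/- Pudlák–Rödl disjointification lemma: Let G₁ and G₂ be uniform families on an infinite set Y ⊆ ω, and let φ₁, φ₂ be one-to-one maps defined on G₁ and G₂ respectively. Then there exists an infinite X ⊆ Y such that either (1) G₁↾X = G₂↾X and φ₁(A) = φ₂(A) for every A ∈ G₁↾X, or (2) φ₁(G₁↾X) ∩ φ₂(G₂↾X) = ∅. -/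
open Ordinal

/-- The derived family `G(n) = {A : {n} ∪ A ∈ G ∧ n < min A}`. -/
def derFam (G : Set (Finset ℕ)) (n : ℕ) : Set (Finset ℕ) :=
  {A | insert n A ∈ G ∧ ∀ x ∈ A, n < x}

/-- `α`-uniform families of finite subsets on an infinite set `X ⊆ ω`. -/
inductive IsUnifOmega : Ordinal → Set (Finset ℕ) → Set ℕ → Prop
  | zero (X : Set ℕ) : IsUnifOmega 0 {∅} X
  | succ (β : Ordinal) (G : Set (Finset ℕ)) (X : Set ℕ) (h0 : ∅ ∉ G)
      (h : ∀ n ∈ X, IsUnifOmega β (derFam G n) {m ∈ X | n < m}) :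
      IsUnifOmega (β + 1) G X
  | limit (α : Ordinal) (G : Set (Finset ℕ)) (X : Set ℕ) (hα : Order.IsSuccLimit α) (h0 : ∅ ∉ G)
      (f : ℕ → Ordinal) (hf : StrictMono f) (hsup : (⨆ n, f n) = α)
      (h : ∀ n ∈ X, IsUnifOmega (f n) (derFam G n) {m ∈ X | n < m}) :
      IsUnifOmega α G X

/-!
Induction on the rank of `G₁`. By Nash-Williams' theorem (a partition of a uniform family is
homogeneous on some infinite set) we may shrink `Y` so that all coincidences `φ₁ A = φ₂ B` have
the same shape: `min A` lies below `B`, `min B` lies below `A`, or `min A = min B`.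
In the first shape all coincidences can be removed: for each `n` homogenise the `B` whose
partner contains `n`. If for some `n` every `B` has such a partner, the part of the set above
`n` has no coincidences; otherwise the diagonal set has none, because there a coincidence
`φ₁ A = φ₂ B` would make `B` a set above `min A` whose partner contains `min A`.
The second shape is symmetric. In the third, `A` and `B` split at their common minimum `n` into
the derived families at `n`, which have smaller rank; the induction hypothesis at each `n`,
glued by a diagonal fusion and a pigeonhole, gives one of the two alternatives uniformly.
-/

open Set

theorem Set.sep_subset_sep_left {α : Type*} {s t : Set α} (h : s ⊆ t) (p : α → Prop) :
    {x ∈ s | p x} ⊆ {x ∈ t | p x} :=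
  fun _ hx => ⟨h hx.1, hx.2⟩

theorem Set.Infinite.sep_lt {Z : Set ℕ} (hZ : Z.Infinite) (n : ℕ) : {m ∈ Z | n < m}.Infinite :=
  (hZ.sdiff (finite_Iic n)).mono fun _ hm => ⟨hm.1, not_le.1 hm.2⟩

theorem exists_infinite_forall_mem_sep_lt {Y : Set ℕ} (hY : Y.Infinite)
    {Q : ℕ → Set ℕ → Prop} (hQ : ∀ n, Antitone (Q n))
    (step : ∀ n ∈ Y, ∀ Z ⊆ {m ∈ Y | n < m}, Z.Infinite → ∃ Z' ⊆ Z, Z'.Infinite ∧ Q n Z') :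
    ∃ X ⊆ Y, X.Infinite ∧ ∀ n ∈ X, Q n {m ∈ X | n < m} := by
  have next : ∀ W ⊆ Y, W.Infinite →
      ∃ n ∈ W, ∃ W' ⊆ {m ∈ W | n < m}, W'.Infinite ∧ Q n W' := by
    intro W hWY hW
    obtain ⟨n, hn⟩ := hW.nonempty
    obtain ⟨W', hW'W, hW', hQW'⟩ :=
      step n (hWY hn) _ (sep_subset_sep_left hWY _) (hW.sep_lt n)
    exact ⟨n, hn, W', hW'W, hW', hQW'⟩
  choose! x hx g hgW hg hQg using next
  set W : ℕ → Set ℕ := fun k => g^[k] Y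
  have hW_succ (k : ℕ) : W (k + 1) = g (W k) := Function.iterate_succ_apply' g k Y
  have hW (k : ℕ) : W k ⊆ Y ∧ (W k).Infinite := by
    induction k with
    | zero => exact ⟨subset_rfl, hY⟩
    | succ k ih =>
      rw [hW_succ]
      exact ⟨(hgW _ ih.1 ih.2).trans ((sep_subset _ _).trans ih.1), hg _ ih.1 ih.2⟩
  have hW_sub (k : ℕ) : W (k + 1) ⊆ {m ∈ W k | x (W k) < m} := by
    rw [hW_succ]; exact hgW _ (hW k).1 (hW k).2
  have hQW (k : ℕ) : Q (x (W k)) (W (k + 1)) := by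
    rw [hW_succ]; exact hQg _ (hW k).1 (hW k).2
  have hW_anti : Antitone W := antitone_nat_of_succ_le fun k => (hW_sub k).trans (sep_subset _ _)
  have hx_mem (k : ℕ) : x (W k) ∈ W k := hx _ (hW k).1 (hW k).2
  have hx_mono : StrictMono fun k => x (W k) :=
    strictMono_nat_of_lt_succ fun k => (hW_sub k (hx_mem _)).2
  refine ⟨range fun k => x (W k), range_subset_iff.2 fun k => (hW k).1 (hx_mem k),
    infinite_range_of_injective hx_mono.injective, ?_⟩
  rintro _ ⟨k, rfl⟩
  refine hQ _ ?_ (hQW k)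
  rintro _ ⟨⟨j, rfl⟩, hkj⟩
  exact hW_anti (hx_mono.lt_iff_lt.1 hkj) (hx_mem j)

theorem exists_infinite_forall_mem_sep_lt_or {Y : Set ℕ} (hY : Y.Infinite)
    {Q₀ Q₁ : ℕ → Set ℕ → Prop} (hQ₀ : ∀ n, Antitone (Q₀ n)) (hQ₁ : ∀ n, Antitone (Q₁ n))
    (step : ∀ n ∈ Y, ∀ Z ⊆ {m ∈ Y | n < m}, Z.Infinite →
      ∃ Z' ⊆ Z, Z'.Infinite ∧ (Q₀ n Z' ∨ Q₁ n Z')) :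
    ∃ X ⊆ Y, X.Infinite ∧
      ((∀ n ∈ X, Q₀ n {m ∈ X | n < m}) ∨ ∀ n ∈ X, Q₁ n {m ∈ X | n < m}) := by
  obtain ⟨X, hXY, hX, hQX⟩ :=
    exists_infinite_forall_mem_sep_lt hY (fun n => (hQ₀ n).sup (hQ₁ n)) step
  have hcover : X ⊆ {n ∈ X | Q₀ n {m ∈ X | n < m}} ∪ {n ∈ X | Q₁ n {m ∈ X | n < m}} :=
    fun n hn => (hQX n hn).imp (⟨hn, ·⟩) (⟨hn, ·⟩)
  rcases infinite_union.1 (hX.mono hcover) with h | h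
  · exact ⟨_, (sep_subset _ _).trans hXY, h,
      .inl fun n hn => hQ₀ n (sep_subset_sep_left (sep_subset _ _) _) hn.2⟩
  · exact ⟨_, (sep_subset _ _).trans hXY, h,
      .inr fun n hn => hQ₁ n (sep_subset_sep_left (sep_subset _ _) _) hn.2⟩

theorem Finset.lt_of_mem_erase_of_isLeast {s : Finset ℕ} {n m : ℕ}
    (hn : IsLeast (↑s : Set ℕ) n) (hm : m ∈ s.erase n) : n < m :=
  (hn.2 (Finset.mem_of_mem_erase hm)).lt_of_ne (Finset.ne_of_mem_erase hm).symm

theorem Finset.erase_mem_derFam {G : Set (Finset ℕ)} {s : Finset ℕ} {n : ℕ} (hs : s ∈ G)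
    (hn : IsLeast (↑s : Set ℕ) n) : s.erase n ∈ derFam G n :=
  ⟨by rwa [Finset.insert_erase hn.1], fun _ => Finset.lt_of_mem_erase_of_isLeast hn⟩

theorem Finset.coe_erase_subset_sep_lt {s : Finset ℕ} {n : ℕ} {X : Set ℕ} (hsX : ↑s ⊆ X)
    (hn : IsLeast (↑s : Set ℕ) n) : ↑(s.erase n) ⊆ {m ∈ X | n < m} := fun _ hm =>
  ⟨hsX (Finset.mem_of_mem_erase hm), Finset.lt_of_mem_erase_of_isLeast hn hm⟩

theorem forall_mem_of_forall_derFam {G : Set (Finset ℕ)} {X : Set ℕ} {P : Finset ℕ → Prop}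
    (he : ∅ ∉ G) (h : ∀ n ∈ X, ∀ t ∈ derFam G n, ↑t ⊆ {m ∈ X | n < m} → P (insert n t)) :
    ∀ s ∈ G, ↑s ⊆ X → P s := by
  intro s hs hsX
  have hn := s.isLeast_min' (Finset.nonempty_iff_ne_empty.2 (ne_of_mem_of_not_mem hs he))
  rw [← Finset.insert_erase hn.1]
  exact h _ (hsX hn.1) _ (s.erase_mem_derFam hs hn) (Finset.coe_erase_subset_sep_lt hsX hn)

theorem Set.InjOn.comp_insert_derFam {R : Type*} {φ : Finset ℕ → R} {G : Set (Finset ℕ)}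
    (hφ : InjOn φ G) (n : ℕ) : InjOn (φ ∘ insert n) (derFam G n) := by
  intro A hA B hB hAB
  rw [← Finset.erase_insert fun hn => (hA.2 n hn).false,
    ← Finset.erase_insert fun hn => (hB.2 n hn).false, hφ hA.1 hB.1 hAB]

namespace IsUnifOmega

variable {α : Ordinal} {G : Set (Finset ℕ)} {Y : Set ℕ}

theorem mono (h : IsUnifOmega α G Y) {X : Set ℕ} (hXY : X ⊆ Y) : IsUnifOmega α G X := by
  induction h generalizing X with
  | zero => exact .zero X
  | succ β G Y h0 _ ih =>
    exact .succ β G X h0 fun n hn => ih n (hXY hn) (sep_subset_sep_left hXY _)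
  | limit α G Y hα h0 f hf hsup _ ih =>
    exact .limit α G X hα h0 f hf hsup fun n hn => ih n (hXY hn) (sep_subset_sep_left hXY _)

theorem eq_singleton_empty (h : IsUnifOmega α G Y) (he : ∅ ∈ G) : G = {∅} := by
  cases h with
  | zero => rfl
  | succ _ _ _ h0 | limit _ _ _ _ h0 => exact absurd he h0

theorem exists_lt_derFam (h : IsUnifOmega α G Y) (he : ∅ ∉ G) :
    ∀ n ∈ Y, ∃ β < α, IsUnifOmega β (derFam G n) {m ∈ Y | n < m} := by
  cases h with
  | zero => exact absurd rfl he
  | succ β _ _ _ h => exact fun n hn => ⟨β, Order.lt_add_one_iff.2 le_rfl, h n hn⟩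
  | limit _ _ _ _ _ f hf hsup h =>
    refine fun n hn => ⟨f n, ?_, h n hn⟩
    calc f n < f (n + 1) := hf n.lt_succ_self
      _ ≤ ⨆ m, f m := Ordinal.le_iSup f (n + 1)
      _ = _ := hsup

/-- Nash-Williams' theorem for uniform families. -/
theorem exists_homogeneous (h : IsUnifOmega α G Y) (H : Set (Finset ℕ)) {X : Set ℕ}
    (hXY : X ⊆ Y) (hX : X.Infinite) :
    ∃ X' ⊆ X, X'.Infinite ∧
      ((∀ s ∈ G, ↑s ⊆ X' → s ∈ H) ∨ ∀ s ∈ G, ↑s ⊆ X' → s ∉ H) := by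
  induction h generalizing H X with
  | zero =>
    by_cases hH : ∅ ∈ H
    · exact ⟨X, subset_rfl, hX, .inl fun s hs _ => (mem_singleton_iff.1 hs) ▸ hH⟩
    · exact ⟨X, subset_rfl, hX, .inr fun s hs _ => (mem_singleton_iff.1 hs) ▸ hH⟩
  | succ _ G Y h0 _ ih | limit _ G Y _ h0 _ _ _ _ ih =>
    obtain ⟨X', hX'X, hX', hQ⟩ := exists_infinite_forall_mem_sep_lt_or hX
      (Q₀ := fun n Z => ∀ t ∈ derFam G n, ↑t ⊆ Z → insert n t ∈ H)
      (Q₁ := fun n Z => ∀ t ∈ derFam G n, ↑t ⊆ Z → insert n t ∉ H)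
      (fun _ _ _ hZ hQ t ht htZ => hQ t ht (htZ.trans hZ))
      (fun _ _ _ hZ hQ t ht htZ => hQ t ht (htZ.trans hZ))
      fun n hn Z hZ hZinf =>
        ih n (hXY hn) {t | insert n t ∈ H} (hZ.trans (sep_subset_sep_left hXY _)) hZinf
    exact ⟨X', hX'X, hX',
      hQ.imp (forall_mem_of_forall_derFam h0) (forall_mem_of_forall_derFam h0)⟩

end IsUnifOmega

section Disjointification

variable {R : Type*}

def AgreeOn (G₁ G₂ : Set (Finset ℕ)) (φ₁ φ₂ : Finset ℕ → R) (X : Set ℕ) : Prop :=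
  (∀ s : Finset ℕ, ↑s ⊆ X → (s ∈ G₁ ↔ s ∈ G₂)) ∧ ∀ s ∈ G₁, ↑s ⊆ X → φ₁ s = φ₂ s

def DisjointOn (G₁ G₂ : Set (Finset ℕ)) (φ₁ φ₂ : Finset ℕ → R) (X : Set ℕ) : Prop :=
  ∀ A ∈ G₁, ↑A ⊆ X → ∀ B ∈ G₂, ↑B ⊆ X → φ₁ A ≠ φ₂ B

def StartsBefore (A B : Finset ℕ) : Prop :=
  ∃ a ∈ A, ∀ b ∈ B, a < b

variable {G₁ G₂ : Set (Finset ℕ)} {φ₁ φ₂ : Finset ℕ → R} {X Y : Set ℕ}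

theorem antitone_agreeOn : Antitone (AgreeOn G₁ G₂ φ₁ φ₂) :=
  fun _ _ hXY h => ⟨fun s hs => h.1 s (hs.trans hXY), fun s hs hsX => h.2 s hs (hsX.trans hXY)⟩

theorem antitone_disjointOn : Antitone (DisjointOn G₁ G₂ φ₁ φ₂) :=
  fun _ _ hXY h A hA hAX B hB hBX => h A hA (hAX.trans hXY) B hB (hBX.trans hXY)

theorem DisjointOn.symm (h : DisjointOn G₁ G₂ φ₁ φ₂ X) : DisjointOn G₂ G₁ φ₂ φ₁ X :=
  fun B hB hBX A hA hAX => (h A hA hAX B hB hBX).symm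

theorem agreeOn_or_disjointOn_singleton_empty (φ₁ φ₂ : Finset ℕ → R) (X : Set ℕ) :
    AgreeOn {∅} {∅} φ₁ φ₂ X ∨ DisjointOn {∅} {∅} φ₁ φ₂ X := by
  by_cases h : φ₁ ∅ = φ₂ ∅
  · exact .inl ⟨fun _ _ => Iff.rfl, fun s hs _ => (mem_singleton_iff.1 hs) ▸ h⟩
  · exact .inr fun A hA _ B hB _ => by rwa [mem_singleton_iff.1 hA, mem_singleton_iff.1 hB]

theorem exists_disjointOn_of_eq_singleton_empty (hY : Y.Infinite) (h₁ : G₁ = {∅})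
    (he₂ : ∅ ∉ G₂) (hφ₂ : InjOn φ₂ G₂) : ∃ X ⊆ Y, X.Infinite ∧ DisjointOn G₁ G₂ φ₁ φ₂ X := by
  subst h₁
  by_cases hpartner : ∃ B ∈ G₂, φ₁ ∅ = φ₂ B
  · obtain ⟨B, hB, hφB⟩ := hpartner
    obtain ⟨m, hm⟩ := Finset.nonempty_iff_ne_empty.2 (ne_of_mem_of_not_mem hB he₂)
    refine ⟨Y \ {m}, sdiff_subset, hY.sdiff (finite_singleton m), ?_⟩
    rintro A hA - B' hB' hB'X hAB'
    rw [mem_singleton_iff.1 hA] at hAB'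
    obtain rfl : B' = B := hφ₂ hB' hB (hAB'.symm.trans hφB)
    exact (hB'X hm).2 rfl
  · refine ⟨Y, subset_rfl, hY, fun A hA _ B hB _ hAB => hpartner ⟨B, hB, ?_⟩⟩
    rwa [mem_singleton_iff.1 hA] at hAB

theorem exists_disjointOn_of_startsBefore {α₂ : Ordinal} (hY : Y.Infinite)
    (h₂ : IsUnifOmega α₂ G₂ Y) (hφ₁ : InjOn φ₁ G₁)
    (hbefore : ∀ A ∈ G₁, ↑A ⊆ Y → ∀ B ∈ G₂, ↑B ⊆ Y → φ₁ A = φ₂ B → StartsBefore A B) :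
    ∃ X ⊆ Y, X.Infinite ∧ DisjointOn G₁ G₂ φ₁ φ₂ X := by
  let partners (n : ℕ) : Set (Finset ℕ) := {B | ∃ A ∈ G₁, n ∈ A ∧ φ₁ A = φ₂ B}
  obtain ⟨X, hXY, hX, hQ | hQ⟩ := exists_infinite_forall_mem_sep_lt_or hY
    (Q₀ := fun n Z => ∀ B ∈ G₂, ↑B ⊆ Z → B ∈ partners n)
    (Q₁ := fun n Z => ∀ B ∈ G₂, ↑B ⊆ Z → B ∉ partners n)
    (fun _ _ _ hZ hQ B hB hBZ => hQ B hB (hBZ.trans hZ))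
    (fun _ _ _ hZ hQ B hB hBZ => hQ B hB (hBZ.trans hZ))
    fun n _ Z hZ hZinf => h₂.exists_homogeneous (partners n) (hZ.trans (sep_subset _ _)) hZinf
  · -- above `n`, a coincidence `φ₁ A = φ₂ B` would force `n ∈ A`
    obtain ⟨n, hn⟩ := hX.nonempty
    refine ⟨{m ∈ X | n < m}, (sep_subset _ _).trans hXY, hX.sep_lt n, ?_⟩
    intro A hA hAX B hB hBX hAB
    obtain ⟨A', hA', hnA', hA'B⟩ := hQ n hn B hB hBX
    obtain rfl : A' = A := hφ₁ hA' hA (hA'B.trans hAB.symm)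
    exact (hAX hnA').2.false
  · refine ⟨X, hXY, hX, fun A hA hAX B hB hBX hAB => ?_⟩
    obtain ⟨a, ha, haB⟩ := hbefore A hA (hAX.trans hXY) B hB (hBX.trans hXY) hAB
    exact hQ a (hAX ha) B hB (fun b hb => ⟨hBX hb, haB b hb⟩) ⟨A, hA, ha, hAB⟩

theorem exists_disjointOn_or_not_startsBefore {α₂ : Ordinal} (hY : Y.Infinite)
    (h₂ : IsUnifOmega α₂ G₂ Y) (hφ₁ : InjOn φ₁ G₁) :
    ∃ X ⊆ Y, X.Infinite ∧ (DisjointOn G₁ G₂ φ₁ φ₂ X ∨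
      ∀ A ∈ G₁, ↑A ⊆ X → ∀ B ∈ G₂, ↑B ⊆ X → φ₁ A = φ₂ B → ¬StartsBefore A B) := by
  obtain ⟨X, hXY, hX, hH | hH⟩ := h₂.exists_homogeneous
    {B | ∃ A ∈ G₁, φ₁ A = φ₂ B ∧ StartsBefore A B} subset_rfl hY
  · obtain ⟨X', hX'X, hX', hdisj⟩ := exists_disjointOn_of_startsBefore hX (h₂.mono hXY) hφ₁
      fun A hA _ B hB hBX hAB => by
        obtain ⟨A', hA', hA'B, hbefore⟩ := hH B hB hBX
        rwa [hφ₁ hA hA' (hAB.trans hA'B.symm)]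
    exact ⟨X', hX'X.trans hXY, hX', .inl hdisj⟩
  · exact ⟨X, hXY, hX, .inr fun A hA _ B hB hBX hAB hbefore => hH B hB hBX ⟨A, hA, hAB, hbefore⟩⟩

theorem exists_isLeast_of_not_startsBefore {A B : Finset ℕ} (hA : A.Nonempty) (hB : B.Nonempty)
    (hAB : ¬StartsBefore A B) (hBA : ¬StartsBefore B A) :
    ∃ n, IsLeast (↑A : Set ℕ) n ∧ IsLeast (↑B : Set ℕ) n := by
  have hle {A B : Finset ℕ} (hA : A.Nonempty) (hB : B.Nonempty) (hAB : ¬StartsBefore A B) :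
      B.min' hB ≤ A.min' hA :=
    not_lt.1 fun hlt => hAB ⟨_, A.min'_mem hA, fun b hb => hlt.trans_le (B.min'_le b hb)⟩
  refine ⟨A.min' hA, A.isLeast_min' hA, ?_⟩
  rw [← (hle hA hB hAB).antisymm (hle hB hA hBA)]
  exact B.isLeast_min' hB

theorem exists_disjointOn_or_isLeast {α₁ α₂ : Ordinal} (hY : Y.Infinite)
    (h₁ : IsUnifOmega α₁ G₁ Y) (h₂ : IsUnifOmega α₂ G₂ Y) (hφ₁ : InjOn φ₁ G₁)
    (hφ₂ : InjOn φ₂ G₂) (he₁ : ∅ ∉ G₁) (he₂ : ∅ ∉ G₂) :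
    ∃ X ⊆ Y, X.Infinite ∧ (DisjointOn G₁ G₂ φ₁ φ₂ X ∨
      ∀ A ∈ G₁, ↑A ⊆ X → ∀ B ∈ G₂, ↑B ⊆ X → φ₁ A = φ₂ B →
        ∃ n, IsLeast (↑A : Set ℕ) n ∧ IsLeast (↑B : Set ℕ) n) := by
  obtain ⟨X₁, hX₁Y, hX₁, hdisj | hAB⟩ := exists_disjointOn_or_not_startsBefore hY h₂ hφ₁ (φ₂ := φ₂)
  · exact ⟨X₁, hX₁Y, hX₁, .inl hdisj⟩
  obtain ⟨X₂, hX₂X₁, hX₂, hdisj | hBA⟩ :=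
    exists_disjointOn_or_not_startsBefore hX₁ (h₁.mono hX₁Y) hφ₂ (φ₂ := φ₁)
  · exact ⟨X₂, hX₂X₁.trans hX₁Y, hX₂, .inl hdisj.symm⟩
  refine ⟨X₂, hX₂X₁.trans hX₁Y, hX₂, .inr fun A hA hAX B hB hBX hφAB => ?_⟩
  exact exists_isLeast_of_not_startsBefore
    (Finset.nonempty_iff_ne_empty.2 (ne_of_mem_of_not_mem hA he₁))
    (Finset.nonempty_iff_ne_empty.2 (ne_of_mem_of_not_mem hB he₂))
    (hAB A hA (hAX.trans hX₂X₁) B hB (hBX.trans hX₂X₁) hφAB) (hBA B hB hBX A hA hAX hφAB.symm)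

theorem agreeOn_of_forall_agreeOn_derFam (he₁ : ∅ ∉ G₁) (he₂ : ∅ ∉ G₂)
    (h : ∀ n ∈ X, AgreeOn (derFam G₁ n) (derFam G₂ n) (φ₁ ∘ insert n) (φ₂ ∘ insert n)
      {m ∈ X | n < m}) :
    AgreeOn G₁ G₂ φ₁ φ₂ X := by
  refine ⟨fun s hsX => ⟨fun hs => ?_, fun hs => ?_⟩,
    forall_mem_of_forall_derFam he₁ fun n hn t ht htX => (h n hn).2 t ht htX⟩
  · exact forall_mem_of_forall_derFam he₁ (P := (· ∈ G₂))
      (fun n hn t ht htX => (((h n hn).1 t htX).1 ht).1) s hs hsX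
  · exact forall_mem_of_forall_derFam he₂ (P := (· ∈ G₁))
      (fun n hn t ht htX => (((h n hn).1 t htX).2 ht).1) s hs hsX

theorem disjointOn_of_forall_disjointOn_derFam
    (hleast : ∀ A ∈ G₁, ↑A ⊆ X → ∀ B ∈ G₂, ↑B ⊆ X → φ₁ A = φ₂ B →
      ∃ n, IsLeast (↑A : Set ℕ) n ∧ IsLeast (↑B : Set ℕ) n)
    (h : ∀ n ∈ X, DisjointOn (derFam G₁ n) (derFam G₂ n) (φ₁ ∘ insert n) (φ₂ ∘ insert n)
      {m ∈ X | n < m}) :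
    DisjointOn G₁ G₂ φ₁ φ₂ X := by
  intro A hA hAX B hB hBX hAB
  obtain ⟨n, hnA, hnB⟩ := hleast A hA hAX B hB hBX hAB
  rw [← Finset.insert_erase hnA.1, ← Finset.insert_erase hnB.1] at hAB
  exact h n (hAX hnA.1) _ (A.erase_mem_derFam hA hnA) (Finset.coe_erase_subset_sep_lt hAX hnA)
    _ (B.erase_mem_derFam hB hnB) (Finset.coe_erase_subset_sep_lt hBX hnB) hAB

theorem exists_agreeOn_or_disjointOn {α₁ α₂ : Ordinal} (hY : Y.Infinite)
    (h₁ : IsUnifOmega α₁ G₁ Y) (h₂ : IsUnifOmega α₂ G₂ Y) (hφ₁ : InjOn φ₁ G₁)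
    (hφ₂ : InjOn φ₂ G₂) :
    ∃ X ⊆ Y, X.Infinite ∧ (AgreeOn G₁ G₂ φ₁ φ₂ X ∨ DisjointOn G₁ G₂ φ₁ φ₂ X) := by
  induction α₁ using WellFoundedLT.induction generalizing α₂ G₁ G₂ Y φ₁ φ₂ with
  | ind α₁ ih =>
  by_cases he₁ : ∅ ∈ G₁ <;> by_cases he₂ : ∅ ∈ G₂
  · rw [h₁.eq_singleton_empty he₁, h₂.eq_singleton_empty he₂]
    exact ⟨Y, subset_rfl, hY, agreeOn_or_disjointOn_singleton_empty φ₁ φ₂ Y⟩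
  · obtain ⟨X, hXY, hX, hdisj⟩ :=
      exists_disjointOn_of_eq_singleton_empty hY (h₁.eq_singleton_empty he₁) he₂ hφ₂ (φ₁ := φ₁)
    exact ⟨X, hXY, hX, .inr hdisj⟩
  · obtain ⟨X, hXY, hX, hdisj⟩ :=
      exists_disjointOn_of_eq_singleton_empty hY (h₂.eq_singleton_empty he₂) he₁ hφ₁ (φ₁ := φ₂)
    exact ⟨X, hXY, hX, .inr hdisj.symm⟩
  obtain ⟨Y', hY'Y, hY', hdisj | hleast⟩ :=
    exists_disjointOn_or_isLeast hY h₁ h₂ hφ₁ hφ₂ he₁ he₂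
  · exact ⟨Y', hY'Y, hY', .inr hdisj⟩
  have hder (n : ℕ) (hn : n ∈ Y') (Z : Set ℕ) (hZ : Z ⊆ {m ∈ Y' | n < m}) (hZinf : Z.Infinite) :
      ∃ Z' ⊆ Z, Z'.Infinite ∧
        (AgreeOn (derFam G₁ n) (derFam G₂ n) (φ₁ ∘ insert n) (φ₂ ∘ insert n) Z' ∨
          DisjointOn (derFam G₁ n) (derFam G₂ n) (φ₁ ∘ insert n) (φ₂ ∘ insert n) Z') := by
    obtain ⟨β₁, hβ₁, hder₁⟩ := h₁.exists_lt_derFam he₁ n (hY'Y hn)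
    obtain ⟨β₂, -, hder₂⟩ := h₂.exists_lt_derFam he₂ n (hY'Y hn)
    have hZY := hZ.trans (sep_subset_sep_left hY'Y _)
    exact ih β₁ hβ₁ hZinf (hder₁.mono hZY) (hder₂.mono hZY)
      (hφ₁.comp_insert_derFam n) (hφ₂.comp_insert_derFam n)
  obtain ⟨X, hXY', hX, hagree | hdisj⟩ := exists_infinite_forall_mem_sep_lt_or hY'
    (fun _ => antitone_agreeOn) (fun _ => antitone_disjointOn) hder
  · exact ⟨X, hXY'.trans hY'Y, hX, .inl (agreeOn_of_forall_agreeOn_derFam he₁ he₂ hagree)⟩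
  · refine ⟨X, hXY'.trans hY'Y, hX, .inr (disjointOn_of_forall_disjointOn_derFam ?_ hdisj)⟩
    exact fun A hA hAX B hB hBX => hleast A hA (hAX.trans hXY') B hB (hBX.trans hXY')

end Disjointification

theorem pudlak_rodl_disjointification_general {R : Type*} (Y : Set ℕ) (hY : Y.Infinite)
    (G₁ G₂ : Set (Finset ℕ)) (α₁ α₂ : Ordinal)
    (h₁ : IsUnifOmega α₁ G₁ Y) (h₂ : IsUnifOmega α₂ G₂ Y)
    (φ₁ φ₂ : Finset ℕ → R) (hφ₁ : Set.InjOn φ₁ G₁) (hφ₂ : Set.InjOn φ₂ G₂) :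
    ∃ X : Set ℕ, X ⊆ Y ∧ X.Infinite ∧
      (({s ∈ G₁ | (↑s : Set ℕ) ⊆ X} = {s ∈ G₂ | (↑s : Set ℕ) ⊆ X} ∧
          ∀ A ∈ G₁, (↑A : Set ℕ) ⊆ X → φ₁ A = φ₂ A) ∨
        (φ₁ '' {s ∈ G₁ | (↑s : Set ℕ) ⊆ X} ∩ φ₂ '' {s ∈ G₂ | (↑s : Set ℕ) ⊆ X} = ∅)) := by
  obtain ⟨X, hXY, hX, hagree | hdisj⟩ := exists_agreeOn_or_disjointOn hY h₁ h₂ hφ₁ hφ₂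
  · refine ⟨X, hXY, hX, .inl ⟨?_, hagree.2⟩⟩
    ext s
    exact and_congr_left (hagree.1 s)
  · refine ⟨X, hXY, hX, .inr (disjoint_iff_inter_eq_empty.1 ?_)⟩
    exact disjoint_image_image fun A hA B hB => hdisj A hA.1 hA.2 B hB.1 hB.2

/-- Pudlák–Rödl disjointification lemma. -/
theorem pudlak_rodl_disjointification {R : Type*} (Y : Set ℕ) (hY : Y.Infinite)
    (G₁ G₂ : Set (Finset ℕ)) (α₁ α₂ : Ordinal)
    (hα₁ : α₁.card ≤ Cardinal.aleph0) (hα₂ : α₂.card ≤ Cardinal.aleph0)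
    (h₁ : IsUnifOmega α₁ G₁ Y) (h₂ : IsUnifOmega α₂ G₂ Y)
    (φ₁ φ₂ : Finset ℕ → R) (hφ₁ : Set.InjOn φ₁ G₁) (hφ₂ : Set.InjOn φ₂ G₂) :
    ∃ X : Set ℕ, X ⊆ Y ∧ X.Infinite ∧
      (({s ∈ G₁ | (↑s : Set ℕ) ⊆ X} = {s ∈ G₂ | (↑s : Set ℕ) ⊆ X} ∧
          ∀ A ∈ G₁, (↑A : Set ℕ) ⊆ X → φ₁ A = φ₂ A) ∨
        (φ₁ '' {s ∈ G₁ | (↑s : Set ℕ) ⊆ X} ∩ φ₂ '' {s ∈ G₂ | (↑s : Set ℕ) ⊆ X} = ∅)) :=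
  pudlak_rodl_disjointification_general Y hY G₁ G₂ α₁ α₂ h₁ h₂ φ₁ φ₂ hφ₁ hφ₂
end
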